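/- Fix γ > 0 and assume: (target regularity) x ↦ log p(x, y) has K_p-Lipschitz gradient; (kernel regularity) k_θ(x|z) + ‖∇_{(θ,x,z)} k_θ(x|z)‖ ≤ B_k and ‖∇_x k_θ(x|z) − ∇_x k_{θ'}(x'|z')‖ ≤ K_k ‖(θ, x, z) − (θ', x', z')‖; (reparameterization regularity) ‖∇_{(θ,z)} φ_θ(z, ε)‖_F ≤ a_φ‖ε‖ + b_φ. Define d^{p,γ}_{θ,r}(z, ε) := s^γ_{θ,r}(z, ε) − s_p(z, ε), where s^γ_{θ,r}(z, ε) := ∇_x log(q_{θ,r}(x) + γ) and s_p(z, ε) := ∇_x log p(x, y), both at x = φ_θ(z, ε). Then there exist a_d, b_d > 0 such that for all θ, θ', z, z', ε and all probability measures r, r' with finite first moment: ‖d^{p,γ}_{θ,r}(z, ε) − d^{p,γ}_{θ',r'}(z', ε)‖ ≤ (a_d‖ε‖ + b_d)(‖(θ, z) − (θ', z')‖ + W₁(r, r')). -/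

import Mathlib

open MeasureTheory Filter Topology
open scoped ENNReal NNReal

/-- Shorthand for Euclidean space `ℝ^n`. -/
abbrev Esp (n : ℕ) : Type := EuclideanSpace ℝ (Fin n)

/-- The Wasserstein-1 cost between two measures: the infimum over couplings `π` (measures on the
product with the given marginals) of `∫ ‖z − z'‖ dπ(z, z')`. -/
noncomputable def W1 {E : Type*} [MeasurableSpace E] [NormedAddCommGroup E]
    (r r' : Measure E) : ℝ≥0∞ :=
  ⨅ π : {π : Measure (E × E) // π.map Prod.fst = r ∧ π.map Prod.snd = r'},
    ∫⁻ p, (‖p.1 - p.2‖₊ : ℝ≥0∞) ∂π.1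

/-- The semi-implicit density `q_{θ,r}(x) = ∫ k_θ(x|z) r(dz)`. -/
noncomputable def qdens {dθ dx dz : ℕ} (k : Esp dθ → Esp dx → Esp dz → ℝ)
    (θ : Esp dθ) (r : Measure (Esp dz)) (x : Esp dx) : ℝ :=
  ∫ z, k θ x z ∂r

/-- The score difference `d^{p,γ}_{θ,r}(z, ε) = ∇_x log(q_{θ,r}(x) + γ) − ∇_x log p(x, y)` at
`x = φ_θ(z, ε)`. -/
noncomputable def scoreDiff {dθ dx dz : ℕ} (γ : ℝ) (k : Esp dθ → Esp dx → Esp dz → ℝ)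
    (p : Esp dx → ℝ) (φ : Esp dθ → Esp dz → Esp dx → Esp dx)
    (θ : Esp dθ) (r : Measure (Esp dz)) (z : Esp dz) (ε : Esp dx) : Esp dx :=
  gradient (fun x => Real.log (qdens k θ r x + γ)) (φ θ z ε) -
    gradient (fun x => Real.log (p x)) (φ θ z ε)

/-!
Differentiating under the integral sign gives `∇ log (q + γ) = (q + γ)⁻¹ ∫ ∇ₓk dr`. Both `q` and
`∫ ∇ₓk dr` integrate functions that are Lipschitz jointly in `(θ, x, z)`; integrating the pointwise
bound against a coupling of `r` and `r'` and taking the infimum over couplings turns the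
`z`-dependence into `W₁(r, r')`. As `q + γ ≥ γ`, the quotient is then Lipschitz with constant
`K_k / γ + B_k² / γ²`. Finally `x = φ_θ(z, ε)` is `(a_φ‖ε‖ + b_φ)`-Lipschitz in `(θ, z)` by the mean
value theorem, and the target score adds `K_p`.
-/

open InnerProductSpace

theorem HasGradientAt.add_const {X : Type*} [NormedAddCommGroup X] [InnerProductSpace ℝ X]
    [CompleteSpace X] {f : X → ℝ} {f' x : X} (hf : HasGradientAt f f' x) (c : ℝ) :
    HasGradientAt (fun y => f y + c) f' x :=
  hf.hasFDerivAt.add_const c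

theorem HasGradientAt.log {X : Type*} [NormedAddCommGroup X] [InnerProductSpace ℝ X]
    [CompleteSpace X] {f : X → ℝ} {f' x : X} (hf : HasGradientAt f f' x) (hx : f x ≠ 0) :
    HasGradientAt (fun y => Real.log (f y)) ((f x)⁻¹ • f') x := by
  rw [hasGradientAt_iff_hasFDerivAt, map_smul]
  exact hf.hasFDerivAt.log hx

theorem hasGradientAt_integral_of_dominated {X Z : Type*} [NormedAddCommGroup X]
    [InnerProductSpace ℝ X] [CompleteSpace X] [MeasurableSpace Z] {μ : Measure Z}
    [IsFiniteMeasure μ] {F : X → Z → ℝ} {B : ℝ} {x₀ : X}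
    (hF_meas : ∀ x, AEStronglyMeasurable (F x) μ) (hF_int : Integrable (F x₀) μ)
    (hF'_meas : AEStronglyMeasurable (fun z => gradient (F · z) x₀) μ)
    (hF_diff : ∀ x z, DifferentiableAt ℝ (F · z) x)
    (hF'_le : ∀ x z, ‖gradient (F · z) x‖ ≤ B) :
    HasGradientAt (fun x => ∫ z, F x z ∂μ) (∫ z, gradient (F · z) x₀ ∂μ) x₀ := by
  have h_norm : ∀ x z, ‖fderiv ℝ (F · z) x‖ = ‖gradient (F · z) x‖ := fun x z => by
    rw [← toDual_gradient, LinearIsometryEquiv.norm_map]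
  have h := hasFDerivAt_integral_of_dominated_of_fderiv_le (μ := μ) (F := F)
    (F' := fun x z => fderiv ℝ (F · z) x) (bound := fun _ => B) (x₀ := x₀) univ_mem
    (Eventually.of_forall hF_meas) hF_int
    (by simpa only [toDual_gradient] using
      (toDual ℝ X).continuous.comp_aestronglyMeasurable hF'_meas)
    (Eventually.of_forall fun z x _ => (h_norm x z).trans_le (hF'_le x z))
    (integrable_const B) (Eventually.of_forall fun z x _ => (hF_diff x z).hasFDerivAt)
  have h_comm : ∫ z, fderiv ℝ (F · z) x₀ ∂μ = toDual ℝ X (∫ z, gradient (F · z) x₀ ∂μ) := by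
    simp_rw [← toDual_gradient]
    exact (toDual ℝ X).toLinearIsometry.integral_comp_comm _
  rwa [h_comm] at h

theorem norm_inv_smul_sub_inv_smul_le {E : Type*} [NormedAddCommGroup E] [NormedSpace ℝ E]
    {γ B a b : ℝ} (hγ : 0 < γ) (ha : γ ≤ a) (hb : γ ≤ b) {u v : E} (hv : ‖v‖ ≤ B) :
    ‖a⁻¹ • u - b⁻¹ • v‖ ≤ γ⁻¹ * ‖u - v‖ + B / γ ^ 2 * |a - b| := by
  have ha0 : 0 < a := hγ.trans_le ha
  have hb0 : 0 < b := hγ.trans_le hb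
  have h_inv : |a⁻¹ - b⁻¹| ≤ |a - b| / γ ^ 2 := by
    rw [inv_sub_inv ha0.ne' hb0.ne', abs_div, abs_of_pos (mul_pos ha0 hb0), abs_sub_comm]
    gcongr
    nlinarith
  calc ‖a⁻¹ • u - b⁻¹ • v‖ = ‖a⁻¹ • (u - v) + (a⁻¹ - b⁻¹) • v‖ := by
        rw [smul_sub, sub_smul, sub_add_sub_cancel]
    _ ≤ |a⁻¹| * ‖u - v‖ + |a⁻¹ - b⁻¹| * ‖v‖ := by
        rw [← Real.norm_eq_abs, ← Real.norm_eq_abs, ← norm_smul, ← norm_smul]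
        exact norm_add_le _ _
    _ ≤ γ⁻¹ * ‖u - v‖ + |a - b| / γ ^ 2 * B := by
        rw [abs_of_pos (inv_pos.mpr ha0)]
        gcongr
    _ = γ⁻¹ * ‖u - v‖ + B / γ ^ 2 * |a - b| := by ring

section Coupling

variable {Z : Type*} [NormedAddCommGroup Z] [MeasurableSpace Z] {r r' : Measure Z}

theorem W1_ne_top [OpensMeasurableSpace Z] [IsProbabilityMeasure r] [IsProbabilityMeasure r']
    (hr : ∫⁻ w, (‖w‖₊ : ℝ≥0∞) ∂r < ⊤) (hr' : ∫⁻ w, (‖w‖₊ : ℝ≥0∞) ∂r' < ⊤) :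
    W1 r r' ≠ ⊤ := by
  have h₁ : (r.prod r').map Prod.fst = r := by simp
  have h₂ : (r.prod r').map Prod.snd = r' := by simp
  refine ne_top_of_le_ne_top ?_ (iInf_le _ ⟨r.prod r', h₁, h₂⟩)
  rw [← lt_top_iff_ne_top]
  calc ∫⁻ p, (‖p.1 - p.2‖₊ : ℝ≥0∞) ∂r.prod r'
      ≤ ∫⁻ p, ((‖p.1‖₊ : ℝ≥0∞) + ‖p.2‖₊) ∂r.prod r' :=
        lintegral_mono fun p => ENNReal.coe_le_coe.mpr (nnnorm_sub_le p.1 p.2)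
    _ = ∫⁻ w, (‖w‖₊ : ℝ≥0∞) ∂r + ∫⁻ w, (‖w‖₊ : ℝ≥0∞) ∂r' := by
        rw [lintegral_add_left measurable_fst.nnnorm.coe_nnreal_ennreal,
          ← lintegral_map (f := fun w : Z => (‖w‖₊ : ℝ≥0∞))
            measurable_nnnorm.coe_nnreal_ennreal measurable_fst,
          ← lintegral_map (f := fun w : Z => (‖w‖₊ : ℝ≥0∞))
            measurable_nnnorm.coe_nnreal_ennreal measurable_snd, h₁, h₂]
    _ < ⊤ := ENNReal.add_lt_top.mpr ⟨hr, hr'⟩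

variable {E : Type*} [NormedAddCommGroup E] [NormedSpace ℝ E] {f g : Z → E} {c L : ℝ}

theorem enorm_integral_sub_integral_le_of_coupling [IsProbabilityMeasure r]
    {π : Measure (Z × Z)} (hπ₁ : π.map Prod.fst = r) (hπ₂ : π.map Prod.snd = r')
    (hf : Integrable f r) (hg : Integrable g r') (hL : 0 ≤ L)
    (hfg : ∀ z z', ‖f z - g z'‖ ≤ c + L * ‖z - z'‖) :
    ‖∫ z, f z ∂r - ∫ z, g z ∂r'‖ₑ ≤
      ENNReal.ofReal c + ENNReal.ofReal L * ∫⁻ p, (‖p.1 - p.2‖₊ : ℝ≥0∞) ∂π := by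
  subst hπ₁ hπ₂
  have hπ_univ : π Set.univ = 1 := by
    rw [← Set.preimage_univ (f := Prod.fst), ← Measure.map_apply measurable_fst .univ,
      measure_univ]
  have h_lift : ∫ z, f z ∂π.map Prod.fst - ∫ z, g z ∂π.map Prod.snd =
      ∫ p, (f p.1 - g p.2) ∂π := by
    rw [integral_map measurable_fst.aemeasurable hf.aestronglyMeasurable,
      integral_map measurable_snd.aemeasurable hg.aestronglyMeasurable]
    exact (integral_sub (hf.comp_measurable measurable_fst)
      (hg.comp_measurable measurable_snd)).symm
  calc ‖∫ z, f z ∂π.map Prod.fst - ∫ z, g z ∂π.map Prod.snd‖ₑ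
      ≤ ∫⁻ p, ‖f p.1 - g p.2‖ₑ ∂π := h_lift ▸ enorm_integral_le_lintegral_enorm _
    _ ≤ ∫⁻ p, (ENNReal.ofReal c + ENNReal.ofReal L * (‖p.1 - p.2‖₊ : ℝ≥0∞)) ∂π := by
        refine lintegral_mono fun p => ?_
        rw [← ofReal_norm, ← enorm_eq_nnnorm, ← ofReal_norm, ← ENNReal.ofReal_mul hL]
        exact (ENNReal.ofReal_le_ofReal (hfg p.1 p.2)).trans ENNReal.ofReal_add_le
    _ = ENNReal.ofReal c + ENNReal.ofReal L * ∫⁻ p, (‖p.1 - p.2‖₊ : ℝ≥0∞) ∂π := by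
        rw [lintegral_add_left measurable_const, lintegral_const, hπ_univ, mul_one,
          lintegral_const_mul' _ _ ENNReal.ofReal_ne_top]

theorem norm_integral_sub_integral_le_W1 [IsProbabilityMeasure r] (hW : W1 r r' ≠ ⊤)
    (hf : Integrable f r) (hg : Integrable g r') (hc : 0 ≤ c) (hL : 0 ≤ L)
    (hfg : ∀ z z', ‖f z - g z'‖ ≤ c + L * ‖z - z'‖) :
    ‖∫ z, f z ∂r - ∫ z, g z ∂r'‖ ≤ c + L * (W1 r r').toReal := by
  have h_couplings :
      Nonempty {π : Measure (Z × Z) // π.map Prod.fst = r ∧ π.map Prod.snd = r'} := by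
    by_contra h
    have := not_nonempty_iff.mp h
    exact hW (iInf_of_empty _)
  have h := le_iInf fun π : {π : Measure (Z × Z) // π.map Prod.fst = r ∧ π.map Prod.snd = r'} =>
    enorm_integral_sub_integral_le_of_coupling π.2.1 π.2.2 hf hg hL hfg
  rw [← ENNReal.add_iInf, ← ENNReal.mul_iInf (fun h => absurd h ENNReal.ofReal_ne_top), ← W1,
    ← ofReal_norm, ← ENNReal.ofReal_toReal hW, ← ENNReal.ofReal_mul hL,
    ← ENNReal.ofReal_add hc (by positivity)] at h
  exact (ENNReal.ofReal_le_ofReal_iff (by positivity)).mp h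

end Coupling

theorem norm_prod_mk_prod_mk_le {A B C : Type*} [NormedAddCommGroup A] [NormedAddCommGroup B]
    [NormedAddCommGroup C] (a : A) (b : B) (c : C) :
    ‖((a, b, c) : A × B × C)‖ ≤ ‖a‖ + ‖b‖ + ‖c‖ := by
  simp only [Prod.norm_mk]
  refine max_le ?_ (max_le ?_ ?_) <;> linarith [norm_nonneg a, norm_nonneg b, norm_nonneg c]

structure KernelRegularity {dθ dx dz : ℕ} (k : Esp dθ → Esp dx → Esp dz → ℝ) (Bk Kk : ℝ) :
    Prop where
  nonneg : ∀ θ x z, 0 ≤ k θ x z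
  differentiable : Differentiable ℝ (fun q : Esp dθ × Esp dx × Esp dz => k q.1 q.2.1 q.2.2)
  bdd : ∀ θ x z,
    k θ x z + ‖fderiv ℝ (fun q : Esp dθ × Esp dx × Esp dz => k q.1 q.2.1 q.2.2) (θ, x, z)‖ ≤ Bk
  gradient_lipschitz : ∀ θ θ' x x' z z',
    ‖gradient (fun y => k θ y z) x - gradient (fun y => k θ' y z') x'‖ ≤
      Kk * ‖((θ, x, z) : Esp dθ × Esp dx × Esp dz) - (θ', x', z')‖

namespace KernelRegularity

variable {dθ dx dz : ℕ} {k : Esp dθ → Esp dx → Esp dz → ℝ} {Bk Kk γ : ℝ}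

theorem le_bound (hk : KernelRegularity k Bk Kk) (θ x z) : k θ x z ≤ Bk := by
  linarith [hk.bdd θ x z, norm_nonneg (fderiv ℝ (fun q : Esp dθ × Esp dx × Esp dz =>
    k q.1 q.2.1 q.2.2) (θ, x, z))]

theorem norm_fderiv_le (hk : KernelRegularity k Bk Kk) (q : Esp dθ × Esp dx × Esp dz) :
    ‖fderiv ℝ (fun q : Esp dθ × Esp dx × Esp dz => k q.1 q.2.1 q.2.2) q‖ ≤ Bk := by
  linarith [hk.bdd q.1 q.2.1 q.2.2, hk.nonneg q.1 q.2.1 q.2.2]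

theorem bound_nonneg (hk : KernelRegularity k Bk Kk) : 0 ≤ Bk :=
  (hk.nonneg 0 0 0).trans (hk.le_bound 0 0 0)

theorem continuous_apply (hk : KernelRegularity k Bk Kk) (θ x) : Continuous (k θ x) :=
  hk.differentiable.continuous.comp (by fun_prop : Continuous fun z : Esp dz => (θ, x, z))

theorem differentiable_slice (hk : KernelRegularity k Bk Kk) (θ z) :
    Differentiable ℝ fun y => k θ y z :=
  hk.differentiable.comp (by fun_prop : Differentiable ℝ fun y : Esp dx => (θ, y, z))

theorem abs_sub_le (hk : KernelRegularity k Bk Kk) (θ θ' x x' z z') :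
    |k θ x z - k θ' x' z'| ≤ Bk * (‖θ - θ'‖ + ‖x - x'‖ + ‖z - z'‖) := by
  calc |k θ x z - k θ' x' z'|
      ≤ Bk * ‖((θ, x, z) : Esp dθ × Esp dx × Esp dz) - (θ', x', z')‖ := by
        rw [← Real.norm_eq_abs]
        exact convex_univ.norm_image_sub_le_of_norm_fderiv_le (fun q _ => hk.differentiable q)
          (fun q _ => hk.norm_fderiv_le q) (Set.mem_univ (θ', x', z')) (Set.mem_univ (θ, x, z))
    _ ≤ Bk * (‖θ - θ'‖ + ‖x - x'‖ + ‖z - z'‖) := by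
        gcongr
        · exact hk.bound_nonneg
        · exact norm_prod_mk_prod_mk_le _ _ _

theorem norm_gradient_le (hk : KernelRegularity k Bk Kk) (θ x z) :
    ‖gradient (fun y => k θ y z) x‖ ≤ Bk := by
  rw [gradient, LinearIsometryEquiv.norm_map]
  refine norm_fderiv_le_of_lip' ℝ hk.bound_nonneg (Eventually.of_forall fun y => ?_)
  simpa using hk.abs_sub_le θ θ y x z z

theorem continuous_gradient (hk : KernelRegularity k Bk Kk) (hKk : 0 ≤ Kk) (θ x) :
    Continuous fun z => gradient (fun y => k θ y z) x := by
  refine (LipschitzWith.of_dist_le_mul fun z z' => ?_).continuous (K := Kk.toNNReal)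
  simpa [dist_eq_norm, hKk] using hk.gradient_lipschitz θ θ x x z z'

theorem integrable (hk : KernelRegularity k Bk Kk) (θ x) (r : Measure (Esp dz))
    [IsFiniteMeasure r] : Integrable (k θ x) r :=
  .of_bound (hk.continuous_apply θ x).aestronglyMeasurable Bk
    (ae_of_all _ fun z => by rw [Real.norm_of_nonneg (hk.nonneg θ x z)]; exact hk.le_bound θ x z)

theorem integrable_gradient (hk : KernelRegularity k Bk Kk) (hKk : 0 ≤ Kk) (θ x)
    (r : Measure (Esp dz)) [IsFiniteMeasure r] :
    Integrable (fun z => gradient (fun y => k θ y z) x) r :=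
  .of_bound (hk.continuous_gradient hKk θ x).aestronglyMeasurable Bk
    (ae_of_all _ fun z => hk.norm_gradient_le θ x z)


theorem qdens_nonneg (hk : KernelRegularity k Bk Kk) (θ) (r : Measure (Esp dz)) (x) :
    0 ≤ qdens k θ r x :=
  integral_nonneg (hk.nonneg θ x)

theorem hasGradientAt_log_qdens_add (hk : KernelRegularity k Bk Kk) (hKk : 0 ≤ Kk)
    (hγ : 0 < γ) (θ) (r : Measure (Esp dz)) [IsFiniteMeasure r] (x) :
    HasGradientAt (fun y => Real.log (qdens k θ r y + γ))
      ((qdens k θ r x + γ)⁻¹ • ∫ z, gradient (fun y => k θ y z) x ∂r) x := by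
  have h_qdens : HasGradientAt (qdens k θ r) (∫ z, gradient (fun y => k θ y z) x ∂r) x :=
    hasGradientAt_integral_of_dominated
      (fun y => (hk.continuous_apply θ y).aestronglyMeasurable) (hk.integrable θ x r)
      (hk.continuous_gradient hKk θ x).aestronglyMeasurable
      (fun y z => (hk.differentiable_slice θ z).differentiableAt)
      (fun y z => hk.norm_gradient_le θ y z)
  exact (h_qdens.add_const γ).log (by linarith [hk.qdens_nonneg θ r x])

theorem norm_gradient_log_qdens_sub_le (hk : KernelRegularity k Bk Kk) (hKk : 0 ≤ Kk)
    (hγ : 0 < γ) (θ θ' x x') {r r' : Measure (Esp dz)} [IsProbabilityMeasure r]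
    [IsProbabilityMeasure r'] (hW : W1 r r' ≠ ⊤) :
    ‖gradient (fun y => Real.log (qdens k θ r y + γ)) x -
        gradient (fun y => Real.log (qdens k θ' r' y + γ)) x'‖ ≤
      (Kk / γ + Bk ^ 2 / γ ^ 2) * (‖θ - θ'‖ + ‖x - x'‖ + (W1 r r').toReal) := by
  set D := ‖θ - θ'‖ + ‖x - x'‖
  set W := (W1 r r').toReal
  have h_grad : ‖∫ z, gradient (fun y => k θ y z) x ∂r -
      ∫ z, gradient (fun y => k θ' y z) x' ∂r'‖ ≤ Kk * D + Kk * W := by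
    refine norm_integral_sub_integral_le_W1 hW (hk.integrable_gradient hKk θ x r)
      (hk.integrable_gradient hKk θ' x' r') (by positivity) hKk fun z z' => ?_
    calc _ ≤ Kk * ‖((θ, x, z) : Esp dθ × Esp dx × Esp dz) - (θ', x', z')‖ :=
          hk.gradient_lipschitz θ θ' x x' z z'
      _ ≤ Kk * (D + ‖z - z'‖) := by
          gcongr
          exact norm_prod_mk_prod_mk_le _ _ _
      _ = Kk * D + Kk * ‖z - z'‖ := by ring
  have h_qdens : |qdens k θ r x - qdens k θ' r' x'| ≤ Bk * D + Bk * W := by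
    refine norm_integral_sub_integral_le_W1 hW (hk.integrable θ x r) (hk.integrable θ' x' r')
      (mul_nonneg hk.bound_nonneg (by positivity)) hk.bound_nonneg fun z z' => ?_
    rw [Real.norm_eq_abs, ← mul_add]
    exact hk.abs_sub_le θ θ' x x' z z'
  have h_bdd : ‖∫ z, gradient (fun y => k θ' y z) x' ∂r'‖ ≤ Bk := by
    simpa using norm_integral_le_of_norm_le_const (μ := r')
      (ae_of_all _ fun z => hk.norm_gradient_le θ' x' z)
  rw [(hk.hasGradientAt_log_qdens_add hKk hγ θ r x).gradient,
    (hk.hasGradientAt_log_qdens_add hKk hγ θ' r' x').gradient]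
  calc _ ≤ γ⁻¹ * ‖∫ z, gradient (fun y => k θ y z) x ∂r -
          ∫ z, gradient (fun y => k θ' y z) x' ∂r'‖ +
        Bk / γ ^ 2 * |qdens k θ r x + γ - (qdens k θ' r' x' + γ)| :=
        norm_inv_smul_sub_inv_smul_le hγ (le_add_of_nonneg_left (hk.qdens_nonneg θ r x))
          (le_add_of_nonneg_left (hk.qdens_nonneg θ' r' x')) h_bdd
    _ ≤ γ⁻¹ * (Kk * D + Kk * W) + Bk / γ ^ 2 * (Bk * D + Bk * W) := by
        rw [add_sub_add_right_eq_sub]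
        have := hk.bound_nonneg
        gcongr
    _ = (Kk / γ + Bk ^ 2 / γ ^ 2) * (D + W) := by ring

end KernelRegularity

theorem score_difference_lipschitz_general {dθ dx dz : ℕ} (γ : ℝ) (hγ : 0 < γ)
    (Bk Kk Kp : ℝ) (hKk : 0 < Kk) (hKp : 0 < Kp)
    (p : Esp dx → ℝ)
    (hp_gradlip : ∀ x x' : Esp dx,
      ‖gradient (fun y => Real.log (p y)) x - gradient (fun y => Real.log (p y)) x'‖ ≤
        Kp * ‖x - x'‖)
    (k : Esp dθ → Esp dx → Esp dz → ℝ)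
    (hk_nonneg : ∀ θ x z, 0 ≤ k θ x z)
    (hk_diff : Differentiable ℝ (fun q : Esp dθ × Esp dx × Esp dz => k q.1 q.2.1 q.2.2))
    (hk_bdd : ∀ (θ : Esp dθ) (x : Esp dx) (z : Esp dz),
      k θ x z + ‖fderiv ℝ (fun q : Esp dθ × Esp dx × Esp dz => k q.1 q.2.1 q.2.2) (θ, x, z)‖ ≤ Bk)
    (hk_gradlip : ∀ (θ θ' : Esp dθ) (x x' : Esp dx) (z z' : Esp dz),
      ‖gradient (fun y => k θ y z) x - gradient (fun y => k θ' y z') x'‖ ≤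
        Kk * ‖((θ, x, z) : Esp dθ × Esp dx × Esp dz) - (θ', x', z')‖)
    (φ : Esp dθ → Esp dz → Esp dx → Esp dx)
    (aφ bφ : ℝ) (haφ : 0 ≤ aφ) (hbφ : 0 < bφ)
    (hφ_diff : ∀ ε, Differentiable ℝ (fun q : Esp dθ × Esp dz => φ q.1 q.2 ε))
    (hφ_bdd : ∀ (θ : Esp dθ) (z : Esp dz) (ε : Esp dx),
      ‖fderiv ℝ (fun q : Esp dθ × Esp dz => φ q.1 q.2 ε) (θ, z)‖ ≤ aφ * ‖ε‖ + bφ) :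
    ∃ ad bd : ℝ, 0 < ad ∧ 0 < bd ∧
      ∀ (θ θ' : Esp dθ) (z z' : Esp dz) (ε : Esp dx)
        (r r' : Measure (Esp dz)),
        IsProbabilityMeasure r → IsProbabilityMeasure r' →
        (∫⁻ w, (‖w‖₊ : ℝ≥0∞) ∂r) < ⊤ → (∫⁻ w, (‖w‖₊ : ℝ≥0∞) ∂r') < ⊤ →
        ‖scoreDiff γ k p φ θ r z ε - scoreDiff γ k p φ θ' r' z' ε‖ ≤
          (ad * ‖ε‖ + bd) * (‖((θ, z) : Esp dθ × Esp dz) - (θ', z')‖ + (W1 r r').toReal) := by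
  have hk : KernelRegularity k Bk Kk := ⟨hk_nonneg, hk_diff, hk_bdd, hk_gradlip⟩
  set A := Kk / γ + Bk ^ 2 / γ ^ 2
  have hA : 0 < A := add_pos_of_pos_of_nonneg (div_pos hKk hγ) (by positivity)
  have hL : 0 ≤ Kp + A := by linarith
  refine ⟨(Kp + A) * aφ + 1, (Kp + A) * bφ + A, by nlinarith [mul_nonneg hL haφ],
    by nlinarith [mul_nonneg hL hbφ.le], ?_⟩
  intro θ θ' z z' ε r r' _ _ hr hr'
  set x := φ θ z ε
  set x' := φ θ' z' ε
  set Δ := ‖((θ, z) : Esp dθ × Esp dz) - (θ', z')‖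
  set W := (W1 r r').toReal
  set c := aφ * ‖ε‖ + bφ
  have hx : ‖x - x'‖ ≤ c * Δ := by
    have := convex_univ.norm_image_sub_le_of_norm_fderiv_le (fun q _ => hφ_diff ε q)
      (fun q _ => hφ_bdd q.1 q.2 ε) (Set.mem_univ (θ', z')) (Set.mem_univ (θ, z))
    exact this
  have hθ : ‖θ - θ'‖ ≤ Δ := norm_fst_le ((θ, z) - (θ', z'))
  have hS := hk.norm_gradient_log_qdens_sub_le hKk.le hγ θ θ' x x' (W1_ne_top hr hr')
  calc ‖scoreDiff γ k p φ θ r z ε - scoreDiff γ k p φ θ' r' z' ε‖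
      ≤ A * (‖θ - θ'‖ + ‖x - x'‖ + W) + Kp * ‖x - x'‖ := by
        unfold scoreDiff
        rw [sub_sub_sub_comm]
        exact (norm_sub_le _ _).trans (add_le_add hS (hp_gradlip x x'))
    _ ≤ A * (Δ + c * Δ + W) + Kp * (c * Δ) := by gcongr
    _ ≤ (((Kp + A) * aφ + 1) * ‖ε‖ + ((Kp + A) * bφ + A)) * (Δ + W) := by
        have h_slack : 0 ≤ (Kp + A) * c * W + ‖ε‖ * (Δ + W) := by positivity
        have h_eq : (((Kp + A) * aφ + 1) * ‖ε‖ + ((Kp + A) * bφ + A)) * (Δ + W) =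
            A * (Δ + c * Δ + W) + Kp * (c * Δ) + ((Kp + A) * c * W + ‖ε‖ * (Δ + W)) := by
          ring
        linarith

/-- Lipschitz continuity of the score difference `d^{p,γ}_{θ,r} = s^γ_{θ,r} − s_p`: under the
Lipschitz-gradient regularity of the target, boundedness and Lipschitz-gradient regularity of the
kernel, and a linear-growth bound on `∇_{(θ,z)} φ`, there are `a_d, b_d > 0` with
`‖d^{p,γ}_{θ,r}(z,ε) − d^{p,γ}_{θ',r'}(z',ε)‖ ≤ (a_d‖ε‖ + b_d)(‖(θ,z) − (θ',z')‖ + W₁(r, r'))`. -/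
theorem score_difference_lipschitz {dθ dx dz : ℕ} (γ : ℝ) (hγ : 0 < γ)
    (Bk Kk Kp : ℝ) (hBk : 0 < Bk) (hKk : 0 < Kk) (hKp : 0 < Kp)
    (p : Esp dx → ℝ) (hp_pos : ∀ x, 0 < p x)
    (hp_diff : Differentiable ℝ (fun x => Real.log (p x)))
    (hp_gradlip : ∀ x x' : Esp dx,
      ‖gradient (fun y => Real.log (p y)) x - gradient (fun y => Real.log (p y)) x'‖ ≤
        Kp * ‖x - x'‖)
    (k : Esp dθ → Esp dx → Esp dz → ℝ)
    (hk_nonneg : ∀ θ x z, 0 ≤ k θ x z)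
    (hk_diff : Differentiable ℝ (fun q : Esp dθ × Esp dx × Esp dz => k q.1 q.2.1 q.2.2))
    (hk_bdd : ∀ (θ : Esp dθ) (x : Esp dx) (z : Esp dz),
      k θ x z + ‖fderiv ℝ (fun q : Esp dθ × Esp dx × Esp dz => k q.1 q.2.1 q.2.2) (θ, x, z)‖ ≤ Bk)
    (hk_gradlip : ∀ (θ θ' : Esp dθ) (x x' : Esp dx) (z z' : Esp dz),
      ‖gradient (fun y => k θ y z) x - gradient (fun y => k θ' y z') x'‖ ≤
        Kk * ‖((θ, x, z) : Esp dθ × Esp dx × Esp dz) - (θ', x', z')‖)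
    (φ : Esp dθ → Esp dz → Esp dx → Esp dx)
    (aφ bφ : ℝ) (haφ : 0 ≤ aφ) (hbφ : 0 < bφ)
    (hφ_diff : ∀ ε, Differentiable ℝ (fun q : Esp dθ × Esp dz => φ q.1 q.2 ε))
    (hφ_bdd : ∀ (θ : Esp dθ) (z : Esp dz) (ε : Esp dx),
      ‖fderiv ℝ (fun q : Esp dθ × Esp dz => φ q.1 q.2 ε) (θ, z)‖ ≤ aφ * ‖ε‖ + bφ) :
    ∃ ad bd : ℝ, 0 < ad ∧ 0 < bd ∧
      ∀ (θ θ' : Esp dθ) (z z' : Esp dz) (ε : Esp dx)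
        (r r' : Measure (Esp dz)),
        IsProbabilityMeasure r → IsProbabilityMeasure r' →
        (∫⁻ w, (‖w‖₊ : ℝ≥0∞) ∂r) < ⊤ → (∫⁻ w, (‖w‖₊ : ℝ≥0∞) ∂r') < ⊤ →
        ‖scoreDiff γ k p φ θ r z ε - scoreDiff γ k p φ θ' r' z' ε‖ ≤
          (ad * ‖ε‖ + bd) * (‖((θ, z) : Esp dθ × Esp dz) - (θ', z')‖ + (W1 r r').toReal) :=
  score_difference_lipschitz_general γ hγ Bk Kk Kp hKk hKp p hp_gradlip k hk_nonneg hk_diff hk_bdd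
    hk_gradlip φ aφ bφ haφ hbφ hφ_diff hφ_bdd
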